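/- (Approximation with γ-approximate subroutine) Under the hypotheses of Theorem 1, if X̂ is instead only a γ-approximate minimizer of the aggregated costs, i.e., Σ_{e_i∈X̂} ĉ_i ≤ γ·min_{X∈Φ} Σ_{e_i∈X} ĉ_i for some γ ≥ 1, then WOWA(X̂) ≤ γ·K·v_1·WOWA(X) for every X ∈ Φ. -/

import Mathlib

open Finset

/-- The piecewise linear function `w*` induced by the weight vector `v`:
`w*(0)=0`, `w*(j/K) = ∑_{i≤j} v i`, linear on each `[(j-1)/K, j/K]`. -/
noncomputable def wstar (K : ℕ) (v : Fin K → ℝ) (t : ℝ) : ℝ :=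
  ∑ i : Fin K, v i * min 1 (max 0 (t * (K : ℝ) - (i.1 : ℝ)))

/-- The WOWA weight `ω_j = w*(∑_{i≤j} p_{σ(i)}) - w*(∑_{i<j} p_{σ(i)})`. -/
noncomputable def wowaWeight (K : ℕ) (v p : Fin K → ℝ) (σ : Equiv.Perm (Fin K))
    (j : Fin K) : ℝ :=
  wstar K v (∑ i ∈ Finset.Iic j, p (σ i)) - wstar K v (∑ i ∈ Finset.Iio j, p (σ i))

/-- The WOWA aggregation of `a` relative to a permutation `σ`
(sorting `a` nonincreasingly gives the WOWA value). -/
noncomputable def wowaW (K : ℕ) (v p : Fin K → ℝ) (σ : Equiv.Perm (Fin K))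
    (a : Fin K → ℝ) : ℝ :=
  ∑ j : Fin K, wowaWeight K v p σ j * a (σ j)

/-! Over a fixed permutation `σ`, WOWA is a linear functional of the costs whose weights are the
increments of the concave function `w*` along the partial sums of `p ∘ σ`. Concavity makes the
set function `S ↦ w*(p(S))` submodular, so the weights of any `σ` are majorized, prefix by
prefix, by those of the permutation sorting the costs; by Abel summation the sorted permutation
therefore maximizes this functional, and `WOWA(X̂) ≤ ∑_{i ∈ X̂} ĉ_i`. On the other side
`t ≤ w*(t)` gives `∑ p_k a_k ≤ WOWA(a)` while the slope bound `K v₁` of `w*` gives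
`ĉ_i ≤ K v₁ ∑ p_k c_{ki}`, so `∑_{i ∈ X} ĉ_i ≤ K v₁ WOWA(X)`; the `γ`-approximation joins the
two chains. -/

theorem ConcaveOn.sum {E ι : Type*} [AddCommGroup E] [Module ℝ E] {s : Set E} {t : Finset ι}
    {f : ι → E → ℝ} (hs : Convex ℝ s) (hf : ∀ i ∈ t, ConcaveOn ℝ s (f i)) :
    ConcaveOn ℝ s fun x => ∑ i ∈ t, f i x := by
  refine ⟨hs, fun x hx y hy a b ha hb hab => ?_⟩
  simp only [smul_eq_mul, mul_sum, ← sum_add_distrib]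
  exact sum_le_sum fun i hi => (hf i hi).2 hx hy ha hb hab

theorem ConcaveOn.map_add_sub_map_le_of_le {s : Set ℝ} {w : ℝ → ℝ} (hw : ConcaveOn ℝ s w)
    {x y h : ℝ} (hx : x ∈ s) (hyh : y + h ∈ s) (hxy : x ≤ y) (hh : 0 ≤ h) :
    w (y + h) - w y ≤ w (x + h) - w x := by
  obtain hD | hD := (show 0 ≤ y + h - x by linarith).eq_or_lt
  · obtain rfl : h = 0 := by linarith
    obtain rfl : y = x := by linarith
    rfl
  have hD0 := hD.ne'
  -- `y` and `x + h` are the two mirror-image convex combinations of `x` and `y + h`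
  have hab : h / (y + h - x) + (y - x) / (y + h - x) = 1 := by field_simp; ring
  have e1 : (h / (y + h - x)) • x + ((y - x) / (y + h - x)) • (y + h) = y := by
    simp only [smul_eq_mul]; field_simp; ring
  have e2 : ((y - x) / (y + h - x)) • x + (h / (y + h - x)) • (y + h) = x + h := by
    simp only [smul_eq_mul]; field_simp; ring
  have hy := hw.2 hx hyh (div_nonneg hh hD.le) (div_nonneg (sub_nonneg.2 hxy) hD.le) hab
  have hxh := hw.2 hx hyh (div_nonneg (sub_nonneg.2 hxy) hD.le) (div_nonneg hh hD.le)
    (by rw [add_comm, hab])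
  rw [e1] at hy
  rw [e2] at hxh
  simp only [smul_eq_mul] at hy hxh
  linear_combination hy + hxh - (w x + w (y + h)) * hab

theorem ConcaveOn.le_map_of_map_zero_of_map_one {w : ℝ → ℝ}
    (hw : ConcaveOn ℝ (Set.Icc 0 1) w) (hw0 : w 0 = 0) (hw1 : w 1 = 1) {t : ℝ}
    (ht : t ∈ Set.Icc 0 1) : t ≤ w t := by
  have := hw.2 (Set.left_mem_Icc.2 zero_le_one) (Set.right_mem_Icc.2 zero_le_one)
    (sub_nonneg.2 ht.2) ht.1 (sub_add_cancel 1 t)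
  simpa [hw0, hw1] using this

theorem sum_mul_le_sum_mul_of_sum_Iic_le {n : ℕ} {x y b : Fin n → ℝ} (hb : Antitone b)
    (hb0 : ∀ i, 0 ≤ b i) (hxy : ∀ j, ∑ i ∈ Iic j, x i ≤ ∑ i ∈ Iic j, y i) :
    ∑ i, x i * b i ≤ ∑ i, y i * b i := by
  induction n with
  | zero => simp
  | succ n ih =>
    set c := b (Fin.last n)
    have peel_last (z : Fin (n + 1) → ℝ) : ∑ i, z i * b i =
        ∑ i : Fin n, z i.castSucc * (b i.castSucc - c) + (∑ i, z i) * c := by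
      simp only [Fin.sum_univ_castSucc, mul_sub, sum_sub_distrib, add_mul, sum_mul]
      ring
    have sum_Iic_castSucc (z : Fin (n + 1) → ℝ) (j : Fin n) :
        ∑ i ∈ Iic j, z i.castSucc = ∑ i ∈ Iic j.castSucc, z i := by
      rw [← Fin.map_castSuccEmb_Iic, sum_map]
      rfl
    rw [peel_last x, peel_last y]
    gcongr ?_ + ?_
    · refine ih (fun i j hij => sub_le_sub_right (hb (Fin.castSucc_le_castSucc_iff.2 hij)) c)
        (fun i => sub_nonneg.2 (hb (Fin.le_last _))) fun j => ?_
      rw [sum_Iic_castSucc x, sum_Iic_castSucc y]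
      exact hxy _
    · exact mul_le_mul_of_nonneg_right
        (by simpa [← Fin.top_eq_last] using hxy (Fin.last n)) (hb0 _)

theorem sum_Iic_sub_Iio {M : Type*} [AddCommGroup M] {n : ℕ} (G : Finset (Fin n) → M)
    (j : Fin n) : ∑ i ∈ Iic j, (G (Iic i) - G (Iio i)) = G (Iic j) - G ∅ := by
  have := Fin.sum_Iic_sub j fun m : Fin (n + 1) => G {i | i.castSucc < m}
  have hIic (k : Fin n) : ({i | i.castSucc < k.succ} : Finset _) = Iic k := by
    ext
    simp [Fin.castSucc_lt_succ_iff]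
  have hIio (k : Fin n) : ({i | i.castSucc < k.castSucc} : Finset _) = Iio k := by
    ext
    simp
  simp only [hIic, hIio] at this
  simpa using this

theorem sum_univ_Iic_sub_Iio {M : Type*} [AddCommGroup M] {n : ℕ} (G : Finset (Fin n) → M) :
    ∑ i, (G (Iic i) - G (Iio i)) = G univ - G ∅ := by
  cases n with
  | zero => simp
  | succ n => simpa [← Fin.top_eq_last] using sum_Iic_sub_Iio G (Fin.last n)

section DistortedSum

variable {K : ℕ} {w : ℝ → ℝ} {p : Fin K → ℝ}

noncomputable def distortedWeight (w : ℝ → ℝ) (p : Fin K → ℝ) (σ : Equiv.Perm (Fin K))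
    (j : Fin K) : ℝ :=
  w (∑ i ∈ Iic j, p (σ i)) - w (∑ i ∈ Iio j, p (σ i))

noncomputable def distortedSum (w : ℝ → ℝ) (p : Fin K → ℝ) (σ : Equiv.Perm (Fin K))
    (a : Fin K → ℝ) : ℝ :=
  ∑ j, distortedWeight w p σ j * a (σ j)

theorem wowaW_eq_distortedSum (v p : Fin K → ℝ) (σ : Equiv.Perm (Fin K)) (a : Fin K → ℝ) :
    wowaW K v p σ a = distortedSum (wstar K v) p σ a :=
  rfl

theorem distortedSum_sum {ι : Type*} (w : ℝ → ℝ) (p : Fin K → ℝ) (σ : Equiv.Perm (Fin K))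
    (s : Finset ι) (f : ι → Fin K → ℝ) :
    distortedSum w p σ (fun j => ∑ i ∈ s, f i j) = ∑ i ∈ s, distortedSum w p σ (f i) := by
  simp only [distortedSum, mul_sum]
  exact sum_comm

theorem sum_Iic_distortedWeight (w : ℝ → ℝ) (p : Fin K → ℝ) (σ : Equiv.Perm (Fin K))
    (j : Fin K) : ∑ i ∈ Iic j, distortedWeight w p σ i = w (∑ i ∈ Iic j, p (σ i)) - w 0 := by
  have := sum_Iic_sub_Iio (fun S => w (∑ i ∈ S, p (σ i))) j
  rwa [sum_empty] at this

variable (hp : ∀ k, 0 ≤ p k) (hps : ∑ k, p k = 1)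
include hp hps

theorem sum_comp_perm_le_one (σ : Equiv.Perm (Fin K)) (s : Finset (Fin K)) :
    ∑ i ∈ s, p (σ i) ≤ 1 :=
  calc ∑ i ∈ s, p (σ i) ≤ ∑ i, p (σ i) :=
        sum_le_sum_of_subset_of_nonneg (subset_univ s) fun i _ _ => hp _
    _ = 1 := by rw [Equiv.sum_comp σ p, hps]

theorem distortedSum_le_mul_sum {L : ℝ}
    (hL : ∀ t s, 0 ≤ t → t ≤ s → s ≤ 1 → w s - w t ≤ L * (s - t)) {a : Fin K → ℝ}
    (ha : ∀ k, 0 ≤ a k) (σ : Equiv.Perm (Fin K)) :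
    distortedSum w p σ a ≤ L * ∑ k, p k * a k := by
  have hweight (j : Fin K) : distortedWeight w p σ j ≤ L * p (σ j) := by
    have hle := sum_comp_perm_le_one hp hps σ (Iic j)
    rw [← sum_Iio_add_eq_sum_Iic] at hle
    rw [distortedWeight, ← sum_Iio_add_eq_sum_Iic]
    simpa using hL _ _ (sum_nonneg fun i _ => hp _) (le_add_of_nonneg_right (hp _)) hle
  calc distortedSum w p σ a ≤ ∑ j, L * p (σ j) * a (σ j) :=
        sum_le_sum fun j _ => mul_le_mul_of_nonneg_right (hweight j) (ha _)
    _ = L * ∑ k, p k * a k := by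
        rw [mul_sum, ← Equiv.sum_comp σ fun k => L * (p k * a k)]
        simp only [mul_assoc]

theorem sum_le_distortedSum (hw : ConcaveOn ℝ (Set.Icc 0 1) w) (hw0 : w 0 = 0) (hw1 : w 1 = 1)
    {a : Fin K → ℝ} (ha : ∀ k, 0 ≤ a k) (σ : Equiv.Perm (Fin K)) (hσ : Antitone (a ∘ σ)) :
    ∑ k, p k * a k ≤ distortedSum w p σ a := by
  rw [← Equiv.sum_comp σ]
  refine sum_mul_le_sum_mul_of_sum_Iic_le hσ (fun j => ha _) fun j => ?_
  rw [sum_Iic_distortedWeight, hw0, sub_zero]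
  exact hw.le_map_of_map_zero_of_map_one hw0 hw1
    ⟨sum_nonneg fun i _ => hp _, sum_comp_perm_le_one hp hps σ _⟩

/-- Submodularity of `S ↦ w (∑ k ∈ S, p k)`: an element of `T` adds less to the prefix of `σ`
before it than to the part of that prefix lying in `T`. -/
theorem sum_distortedWeight_symm_le (hw : ConcaveOn ℝ (Set.Icc 0 1) w) (σ : Equiv.Perm (Fin K))
    (T : Finset (Fin K)) :
    ∑ k ∈ T, distortedWeight w p σ (σ.symm k) ≤ w (∑ k ∈ T, p k) - w 0 := by
  set G : Finset (Fin K) → ℝ := fun S => w (∑ i ∈ S, if σ i ∈ T then p (σ i) else 0)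
  have hG : G univ = w (∑ k ∈ T, p k) := by
    simp only [G]
    rw [Equiv.sum_comp σ fun k => if k ∈ T then p k else 0, sum_ite_mem, univ_inter]
  calc ∑ k ∈ T, distortedWeight w p σ (σ.symm k)
      = ∑ k, if k ∈ T then distortedWeight w p σ (σ.symm k) else 0 := by
        rw [sum_ite_mem, univ_inter]
    _ = ∑ i, if σ i ∈ T then distortedWeight w p σ i else 0 := by
        rw [← Equiv.sum_comp σ]
        simp
    _ ≤ ∑ i, (G (Iic i) - G (Iio i)) := sum_le_sum fun i _ => ?_
    _ = w (∑ k ∈ T, p k) - w 0 := by rw [sum_univ_Iic_sub_Iio, hG]; simp [G]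
  have hQ := sum_comp_perm_le_one hp hps σ (Iic i)
  simp only [G, distortedWeight, ← sum_Iio_add_eq_sum_Iic] at hQ ⊢
  set Q := ∑ l ∈ Iio i, p (σ l)
  set R := ∑ l ∈ Iio i, if σ l ∈ T then p (σ l) else 0
  have hRQ : R ≤ Q := sum_le_sum fun l _ => by split_ifs; exacts [le_rfl, hp _]
  have hR0 : 0 ≤ R := sum_nonneg fun l _ => by split_ifs; exacts [hp _, le_rfl]
  split_ifs with hi
  · exact hw.map_add_sub_map_le_of_le ⟨hR0, by linarith [hp (σ i)]⟩
      ⟨by linarith [hp (σ i)], hQ⟩ hRQ (hp _)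
  · simp

theorem distortedSum_le_of_antitone (hw : ConcaveOn ℝ (Set.Icc 0 1) w) {a : Fin K → ℝ}
    (ha : ∀ k, 0 ≤ a k) (σ τ : Equiv.Perm (Fin K)) (hτ : Antitone (a ∘ τ)) :
    distortedSum w p σ a ≤ distortedSum w p τ a := by
  have hσ : distortedSum w p σ a =
      ∑ j, distortedWeight w p σ (σ.symm (τ j)) * a (τ j) := by
    rw [distortedSum, Equiv.sum_comp τ fun k => distortedWeight w p σ (σ.symm k) * a k,
      ← Equiv.sum_comp σ fun k => distortedWeight w p σ (σ.symm k) * a k]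
    simp
  rw [hσ]
  refine sum_mul_le_sum_mul_of_sum_Iic_le hτ (fun j => ha _) fun j => ?_
  rw [sum_Iic_distortedWeight]
  simpa using sum_distortedWeight_symm_le hp hps hw σ ((Iic j).map τ.toEmbedding)

end DistortedSum

theorem min_one_max_zero_sub (x y : ℝ) : min 1 (max 0 (x - y)) = min x (y + 1) - min x y := by
  simp only [min_def, max_def]
  split_ifs <;> linarith

theorem sum_min_one_max_zero_sub {K : ℕ} {x : ℝ} (hx0 : 0 ≤ x) (hxK : x ≤ K) :
    ∑ i : Fin K, min 1 (max 0 (x - i)) = x := by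
  simp only [min_one_max_zero_sub]
  rw [Fin.sum_univ_eq_sum_range (fun i => min x ((i : ℝ) + 1) - min x i)]
  have := sum_range_sub (fun i : ℕ => min x (i : ℝ)) K
  push_cast at this
  rw [this, min_eq_left hxK, min_eq_right hx0, sub_zero]

section Wstar

variable {K : ℕ} {v : Fin K → ℝ}

theorem wstar_zero : wstar K v 0 = 0 := by
  simp [wstar]

theorem wstar_one (hvs : ∑ i, v i = 1) : wstar K v 1 = 1 := by
  have (i : Fin K) : min 1 (max 0 ((K : ℝ) - i)) = 1 := by
    have : (i : ℝ) + 1 ≤ K := by exact_mod_cast i.isLt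
    rw [max_eq_right (by linarith), min_eq_left (by linarith)]
  simp only [wstar, one_mul, this, mul_one, hvs]

theorem wstar_le_mul (hv : Antitone v) (hK : 0 < K) {t : ℝ} (ht : t ∈ Set.Icc 0 1) :
    wstar K v t ≤ K * v ⟨0, hK⟩ * t := by
  calc wstar K v t ≤ ∑ i : Fin K, v ⟨0, hK⟩ * min 1 (max 0 (t * K - i)) :=
        sum_le_sum fun i _ => by gcongr; exact hv (Nat.zero_le _)
    _ = K * v ⟨0, hK⟩ * t := by
        rw [← mul_sum, sum_min_one_max_zero_sub (mul_nonneg ht.1 (Nat.cast_nonneg K))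
          (mul_le_of_le_one_left (Nat.cast_nonneg K) ht.2)]
        ring

/-- Summation by parts writes `wstar` on `[0, 1]` as a nonnegative combination of the concave
functions `t ↦ min (t K) (i + 1)`, with coefficients `v i - v (i + 1)` and `v (K - 1)`. -/
theorem concaveOn_wstar (hv0 : ∀ i, 0 ≤ v i) (hv : Antitone v) :
    ConcaveOn ℝ (Set.Icc 0 1) (wstar K v) := by
  have hmin (c m : ℝ) : ConcaveOn ℝ (Set.Icc 0 1) fun t => min (t * c) m :=
    ((LinearMap.mulRight ℝ c).concaveOn (convex_Icc 0 1)).inf (concaveOn_const m (convex_Icc 0 1))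
  cases K with
  | zero =>
    have : wstar 0 v = fun _ => 0 := funext fun t => by simp [wstar]
    exact this ▸ concaveOn_const 0 (convex_Icc 0 1)
  | succ k =>
    have hf : ConcaveOn ℝ (Set.Icc 0 1) fun t : ℝ =>
        v (Fin.last k) * min (t * (k + 1 : ℕ)) (k + 1 : ℕ) +
          ∑ i : Fin k, (v i.castSucc - v i.succ) * min (t * (k + 1 : ℕ)) ((i : ℝ) + 1) := by
      refine ((hmin _ _).smul (hv0 _)).add (ConcaveOn.sum (convex_Icc 0 1) fun i _ => ?_)
      exact (hmin _ _).smul (sub_nonneg.2 (hv (Fin.castSucc_le_succ i)))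
    refine hf.congr fun t ht => ?_
    simp only [wstar, min_one_max_zero_sub, mul_sub, sum_sub_distrib]
    rw [Fin.sum_univ_castSucc, Fin.sum_univ_succ]
    simp only [Fin.val_castSucc, Fin.val_last, Fin.val_succ, Fin.val_zero, Nat.cast_zero,
      Nat.cast_add, Nat.cast_one, sub_mul, sum_sub_distrib]
    rw [min_eq_right (mul_nonneg ht.1 (by positivity))]
    ring

theorem wstar_sub_wstar_le (hv0 : ∀ i, 0 ≤ v i) (hv : Antitone v) (hK : 0 < K) {s t : ℝ}
    (ht : 0 ≤ t) (hts : t ≤ s) (hs : s ≤ 1) :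
    wstar K v s - wstar K v t ≤ K * v ⟨0, hK⟩ * (s - t) := by
  have := (concaveOn_wstar hv0 hv).map_add_sub_map_le_of_le (x := 0) (y := t) (h := s - t)
    ⟨le_rfl, zero_le_one⟩ ⟨by linarith, by linarith⟩ ht (sub_nonneg.2 hts)
  rw [add_sub_cancel, zero_add, wstar_zero, sub_zero] at this
  exact this.trans (wstar_le_mul hv hK ⟨sub_nonneg.2 hts, by linarith⟩)

end Wstar

theorem wowa_approx_gamma_general (K n : ℕ) (hK : 0 < K) (γ : ℝ) (hγ : 1 ≤ γ)
    (v p : Fin K → ℝ)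
    (hv0 : ∀ j, 0 ≤ v j) (hvs : ∑ j, v j = 1)
    (hvmono : ∀ i j : Fin K, i ≤ j → v j ≤ v i)
    (hp0 : ∀ j, 0 < p j) (hps : ∑ j, p j = 1)
    (c : Fin K → Fin n → ℝ) (hc : ∀ j i, 0 ≤ c j i)
    (Φ : Finset (Finset (Fin n)))
    (σc : Fin n → Equiv.Perm (Fin K))
    (hσc : ∀ i, ∀ j j' : Fin K, j ≤ j' → c (σc i j') i ≤ c (σc i j) i)
    (σS : Finset (Fin n) → Equiv.Perm (Fin K))
    (hσS : ∀ X : Finset (Fin n), ∀ j j' : Fin K, j ≤ j' →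
      (∑ i ∈ X, c (σS X j') i) ≤ ∑ i ∈ X, c (σS X j) i)
    (Xhat : Finset (Fin n))
    (hXhat : ∀ X ∈ Φ, (∑ i ∈ Xhat, wowaW K v p (σc i) (fun j => c j i)) ≤
      γ * ∑ i ∈ X, wowaW K v p (σc i) (fun j => c j i)) :
    ∀ X ∈ Φ,
      wowaW K v p (σS Xhat) (fun j => ∑ i ∈ Xhat, c j i) ≤
        γ * (K : ℝ) * v ⟨0, hK⟩ *
          wowaW K v p (σS X) (fun j => ∑ i ∈ X, c j i) := by
  intro X hX
  have hv : Antitone v := fun i j hij => hvmono i j hij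
  have hw := concaveOn_wstar hv0 hv
  have hp (k : Fin K) : 0 ≤ p k := (hp0 k).le
  simp only [wowaW_eq_distortedSum] at hXhat ⊢
  calc distortedSum (wstar K v) p (σS Xhat) (fun j => ∑ i ∈ Xhat, c j i)
      = ∑ i ∈ Xhat, distortedSum (wstar K v) p (σS Xhat) (fun j => c j i) :=
        distortedSum_sum _ _ _ _ _
    _ ≤ ∑ i ∈ Xhat, distortedSum (wstar K v) p (σc i) (fun j => c j i) :=
        sum_le_sum fun i _ => distortedSum_le_of_antitone hp hps hw (fun k => hc k i) _ _
          fun j j' hjj' => hσc i j j' hjj'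
    _ ≤ γ * ∑ i ∈ X, distortedSum (wstar K v) p (σc i) (fun j => c j i) := hXhat X hX
    _ ≤ γ * ∑ i ∈ X, K * v ⟨0, hK⟩ * ∑ k, p k * c k i := by
        gcongr with i
        exact distortedSum_le_mul_sum hp hps (fun t s => wstar_sub_wstar_le hv0 hv hK)
          (fun k => hc k i) _
    _ = γ * (K * v ⟨0, hK⟩ * ∑ k, p k * ∑ i ∈ X, c k i) := by
        simp only [← mul_sum, sum_comm (s := X)]
    _ ≤ γ * (K * v ⟨0, hK⟩ * distortedSum (wstar K v) p (σS X) (fun j => ∑ i ∈ X, c j i)) := by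
        gcongr
        · exact mul_nonneg (Nat.cast_nonneg K) (hv0 _)
        · exact sum_le_distortedSum hp hps hw wstar_zero (wstar_one hvs)
            (fun k => sum_nonneg fun i _ => hc k i) _ fun j j' hjj' => hσS X j j' hjj'
    _ = γ * K * v ⟨0, hK⟩ * distortedSum (wstar K v) p (σS X) (fun j => ∑ i ∈ X, c j i) := by
        ring

/-- with a γ-approximate minimizer of the aggregated costs,
WOWA(X̂) ≤ γ·K·v₁·WOWA(X) for every feasible X. -/
theorem wowa_approx_gamma (K n : ℕ) (hK : 0 < K) (γ : ℝ) (hγ : 1 ≤ γ)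
    (v p : Fin K → ℝ)
    (hv0 : ∀ j, 0 ≤ v j) (hvs : ∑ j, v j = 1)
    (hvmono : ∀ i j : Fin K, i ≤ j → v j ≤ v i)
    (hp0 : ∀ j, 0 < p j) (hps : ∑ j, p j = 1)
    (c : Fin K → Fin n → ℝ) (hc : ∀ j i, 0 ≤ c j i)
    (Φ : Finset (Finset (Fin n)))
    (σc : Fin n → Equiv.Perm (Fin K))
    (hσc : ∀ i, ∀ j j' : Fin K, j ≤ j' → c (σc i j') i ≤ c (σc i j) i)
    (σS : Finset (Fin n) → Equiv.Perm (Fin K))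
    (hσS : ∀ X : Finset (Fin n), ∀ j j' : Fin K, j ≤ j' →
      (∑ i ∈ X, c (σS X j') i) ≤ ∑ i ∈ X, c (σS X j) i)
    (Xhat : Finset (Fin n)) (hXhatΦ : Xhat ∈ Φ)
    (hXhat : ∀ X ∈ Φ, (∑ i ∈ Xhat, wowaW K v p (σc i) (fun j => c j i)) ≤
      γ * ∑ i ∈ X, wowaW K v p (σc i) (fun j => c j i)) :
    ∀ X ∈ Φ,
      wowaW K v p (σS Xhat) (fun j => ∑ i ∈ Xhat, c j i) ≤
        γ * (K : ℝ) * v ⟨0, hK⟩ *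
          wowaW K v p (σS X) (fun j => ∑ i ∈ X, c j i) :=
  wowa_approx_gamma_general K n hK γ hγ v p hv0 hvs hvmono hp0 hps c hc Φ σc hσc σS hσS Xhat hXhat
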